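/- arXiv:2207.10019 — 2 statements merged into one kernel-verified Lean document; each statement's English description precedes it below -/
import Mathlib

section
/- Let Σ be a convex spacelike surface in R^{2,1}, and let γ(t) be a unit speed geodesic of Σ with γ(0) = p. Then for every t ≥ 0, the derivative of the extrinsic distance satisfies (d/dt) d_p(γ(t)) ≥ 1, where d_p(q) = sqrt(⟨q-p,q-p⟩). Consequently d_p(γ(t)) ≥ t. -/
/-!
Write `u = γ(t) - p` and `d = γ'(t)`. Concavity of `s ↦ ⟨γ(s), v⟩` compares its derivative at
`t` with its slope on `[0, t]`: `t ⟨d, v⟩ ≤ ⟨u, v⟩` for every future causal `v`, i.e. `u - t d`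
pairs nonnegatively with the whole future cone, hence is itself causal. Expanding
`⟨u - t d, u - t d⟩ ≤ 0` with `⟨d, d⟩ = 1` gives `2t⟨d, u⟩ ≥ |u|² + t² ≥ 2t|u|`, so the
derivative `⟨d, u⟩ / |u|` of `d_p ∘ γ` is at least `1`; at `t = 0` the right derivative is
`|γ'(0)| = 1`. Integrating gives `d_p(γ(t)) ≥ t`.
-/

noncomputable section
open Real Set

/-- The Minkowski bilinear form on `ℝ^{2,1}`. -/
def mink (u v : ℝ × ℝ × ℝ) : ℝ := u.1 * v.1 + u.2.1 * v.2.1 - u.2.2 * v.2.2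

open Filter Topology

def IsFutureCausal (v : ℝ × ℝ × ℝ) : Prop := mink v v ≤ 0 ∧ 0 ≤ v.2.2

lemma mink_comm (u v : ℝ × ℝ × ℝ) : mink u v = mink v u := by
  simp only [mink]; ring

lemma mink_sub_left (u u' v : ℝ × ℝ × ℝ) : mink (u - u') v = mink u v - mink u' v := by
  simp only [mink, Prod.fst_sub, Prod.snd_sub]; ring

lemma mink_smul_left (c : ℝ) (u v : ℝ × ℝ × ℝ) : mink (c • u) v = c * mink u v := by
  simp only [mink, Prod.smul_fst, Prod.smul_snd, smul_eq_mul]; ring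

lemma mink_smul_self (c : ℝ) (u : ℝ × ℝ × ℝ) : mink (c • u) (c • u) = c ^ 2 * mink u u := by
  simp only [mink, Prod.smul_fst, Prod.smul_snd, smul_eq_mul]; ring

lemma mink_sub_smul_self (u d : ℝ × ℝ × ℝ) (t : ℝ) :
    mink (u - t • d) (u - t • d) = mink u u - 2 * t * mink d u + t ^ 2 * mink d d := by
  simp only [mink, Prod.fst_sub, Prod.snd_sub, Prod.smul_fst, Prod.smul_snd, smul_eq_mul]; ring

lemma continuous_mink_self : Continuous fun u : ℝ × ℝ × ℝ => mink u u := by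
  unfold mink; fun_prop

lemma mink_self_nonpos_of_forall_isFutureCausal {w : ℝ × ℝ × ℝ}
    (hw : ∀ v, IsFutureCausal v → 0 ≤ mink w v) : mink w w ≤ 0 := by
  by_contra! hspacelike
  -- If `w` were spacelike, the null vector `v` below would be future-directed with `⟨w, v⟩ < 0`.
  set r := √(w.1 ^ 2 + w.2.1 ^ 2)
  have hr2 : r ^ 2 = w.1 ^ 2 + w.2.1 ^ 2 := sq_sqrt (by positivity)
  have hr : 0 ≤ r := sqrt_nonneg _
  have hlt : w.2.2 ^ 2 < r ^ 2 := by unfold mink at hspacelike; nlinarith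
  have habs : |w.2.2| < r := abs_lt_of_sq_lt_sq hlt hr
  have hv : IsFutureCausal (-w.1, -w.2.1, r) := ⟨by unfold mink; nlinarith, hr⟩
  have hneg : mink w (-w.1, -w.2.1, r) = -r * (r + w.2.2) := by unfold mink; nlinarith
  have := hw _ hv
  nlinarith [neg_abs_le w.2.2]

theorem HasDerivAt.mink {f g : ℝ → ℝ × ℝ × ℝ} {f' g' : ℝ × ℝ × ℝ} {t : ℝ}
    (hf : HasDerivAt f f' t) (hg : HasDerivAt g g' t) :
    HasDerivAt (fun s => mink (f s) (g s)) (mink f' (g t) + mink (f t) g') t := by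
  have hf1 : HasDerivAt (fun s => (f s).1) f'.1 t := by simpa using hf.hasFDerivAt.fst.hasDerivAt
  have hf2 : HasDerivAt (fun s => (f s).2.1) f'.2.1 t := by
    simpa using hf.hasFDerivAt.snd.fst.hasDerivAt
  have hf3 : HasDerivAt (fun s => (f s).2.2) f'.2.2 t := by
    simpa using hf.hasFDerivAt.snd.snd.hasDerivAt
  have hg1 : HasDerivAt (fun s => (g s).1) g'.1 t := by simpa using hg.hasFDerivAt.fst.hasDerivAt
  have hg2 : HasDerivAt (fun s => (g s).2.1) g'.2.1 t := by
    simpa using hg.hasFDerivAt.snd.fst.hasDerivAt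
  have hg3 : HasDerivAt (fun s => (g s).2.2) g'.2.2 t := by
    simpa using hg.hasFDerivAt.snd.snd.hasDerivAt
  exact (((hf1.mul hg1).add (hf2.mul hg2)).sub (hf3.mul hg3)).congr_deriv
    (by unfold _root_.mink; ring)

section Geodesic

variable {γ : ℝ → ℝ × ℝ × ℝ}

lemma mink_self_sub_smul_deriv_nonpos (hγ : Differentiable ℝ γ)
    (hconc : ∀ v, IsFutureCausal v → ConcaveOn ℝ univ fun t => mink (γ t) v)
    {t : ℝ} (ht : 0 < t) :
    mink (γ t - γ 0 - t • deriv γ t) (γ t - γ 0 - t • deriv γ t) ≤ 0 := by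
  refine mink_self_nonpos_of_forall_isFutureCausal fun v hv => ?_
  have hderiv : HasDerivAt (fun s => mink (γ s) v) (mink (deriv γ t) v) t := by
    simpa [mink] using (hγ t).hasDerivAt.mink (hasDerivAt_const t v)
  have hslope := (hconc v hv).le_slope_of_hasDerivAt (mem_univ 0) (mem_univ t) ht hderiv
  rw [slope_def_field, sub_zero, le_div_iff₀ ht] at hslope
  rw [mink_sub_left, mink_smul_left, mink_sub_left]
  linarith

lemma sqrt_mink_le_mink_deriv (hγ : Differentiable ℝ γ)
    (hconc : ∀ v, IsFutureCausal v → ConcaveOn ℝ univ fun t => mink (γ t) v)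
    {t : ℝ} (ht : 0 < t) (hunit : mink (deriv γ t) (deriv γ t) = 1)
    (hspace : 0 ≤ mink (γ t - γ 0) (γ t - γ 0)) :
    √(mink (γ t - γ 0) (γ t - γ 0)) ≤ mink (deriv γ t) (γ t - γ 0) := by
  have hcausal := mink_self_sub_smul_deriv_nonpos hγ hconc ht
  rw [mink_sub_smul_self, hunit, ← sq_sqrt hspace] at hcausal
  nlinarith [sq_nonneg (√(mink (γ t - γ 0) (γ t - γ 0)) - t)]

lemma hasDerivAt_sqrt_mink (hγ : Differentiable ℝ γ) {t : ℝ}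
    (hspace : 0 < mink (γ t - γ 0) (γ t - γ 0)) :
    HasDerivAt (fun s => √(mink (γ s - γ 0) (γ s - γ 0)))
      (mink (deriv γ t) (γ t - γ 0) / √(mink (γ t - γ 0) (γ t - γ 0))) t := by
  have hQ := ((hγ t).hasDerivAt.sub_const (γ 0)).mink ((hγ t).hasDerivAt.sub_const (γ 0))
  convert hQ.sqrt hspace.ne' using 1
  rw [mink_comm (γ t - γ 0) (deriv γ t)]
  field_simp
  ring

lemma hasDerivWithinAt_sqrt_mink_Ici_zero (hγ : DifferentiableAt ℝ γ 0)
    (hunit : mink (deriv γ 0) (deriv γ 0) = 1) :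
    HasDerivWithinAt (fun s => √(mink (γ s - γ 0) (γ s - γ 0))) 1 (Ici 0) 0 := by
  rw [hasDerivWithinAt_iff_tendsto_slope, Ici_sdiff_left]
  have hslope : Tendsto (slope γ 0) (𝓝[>] 0) (𝓝 (deriv γ 0)) :=
    (hasDerivAt_iff_tendsto_slope.mp hγ.hasDerivAt).mono_left
      (nhdsWithin_mono _ fun _ hs => ne_of_gt hs)
  have hlim := ((continuous_sqrt.comp continuous_mink_self).tendsto _).comp hslope
  simp only [Function.comp_def, hunit, sqrt_one] at hlim
  refine hlim.congr' ?_
  filter_upwards [self_mem_nhdsWithin] with s (hs : 0 < s)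
  -- `d_p(γ(s)) / s = |(γ(s) - γ(0)) / s|` for `s > 0`.
  rw [slope_def_module, sub_zero, mink_smul_self, sqrt_mul (by positivity), sqrt_sq (by positivity),
    slope_def_field, sub_zero, sub_self]
  simp [mink, inv_mul_eq_div]

end Geodesic

/-- Let `γ` be a unit-speed geodesic of a convex spacelike surface in `ℝ^{2,1}` with
`γ(0) = p` (convexity being expressed by the concavity of `t ↦ ⟨γ(t), v⟩` for every
future-directed causal `v`), such that `γ(t) - p` is spacelike for `t > 0`. Then for every
`t ≥ 0` the (one-sided) derivative of `t ↦ d_p(γ(t)) = √⟨γ(t)-p, γ(t)-p⟩` is at least `1`;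
consequently `d_p(γ(t)) ≥ t`. -/
theorem stmt5 (γ : ℝ → ℝ × ℝ × ℝ) (hγ : ContDiff ℝ 1 γ) (p : ℝ × ℝ × ℝ) (hp : γ 0 = p)
    (hunit : ∀ t : ℝ, mink (deriv γ t) (deriv γ t) = 1)
    (hconc : ∀ v : ℝ × ℝ × ℝ, mink v v ≤ 0 → 0 ≤ v.2.2 →
      ConcaveOn ℝ univ (fun t => mink (γ t) v))
    (hspace : ∀ t : ℝ, 0 < t → 0 < mink (γ t - p) (γ t - p)) :
    (∀ t : ℝ, 0 ≤ t →
      1 ≤ derivWithin (fun t' => Real.sqrt (mink (γ t' - p) (γ t' - p))) (Ici 0) t) ∧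
    (∀ t : ℝ, 0 ≤ t → t ≤ Real.sqrt (mink (γ t - p) (γ t - p))) := by
  subst hp
  have hdiff := hγ.differentiable one_ne_zero
  set f := fun s => √(mink (γ s - γ 0) (γ s - γ 0))
  have hderiv_ge : ∀ t > 0, 1 ≤ deriv f t := fun t ht => by
    rw [(hasDerivAt_sqrt_mink hdiff (hspace t ht)).deriv, one_le_div (sqrt_pos.2 (hspace t ht))]
    exact sqrt_mink_le_mink_deriv hdiff (fun v hv => hconc v hv.1 hv.2) ht (hunit t)
      (hspace t ht).le
  refine ⟨fun t ht => ?_, fun t ht => ?_⟩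
  · rcases ht.eq_or_lt with rfl | ht
    · rw [(hasDerivWithinAt_sqrt_mink_Ici_zero (hdiff 0) (hunit 0)).derivWithin
        (uniqueDiffOn_Ici 0 0 self_mem_Ici)]
    · rw [derivWithin_of_mem_nhds (Ici_mem_nhds ht)]
      exact hderiv_ge t ht
  · have hpos : ∀ s ∈ interior (Ici (0 : ℝ)), 0 < s := fun s hs => by rwa [interior_Ici] at hs
    have hf : Continuous f :=
      continuous_sqrt.comp (continuous_mink_self.comp (hdiff.continuous.sub continuous_const))
    have hf_diff : DifferentiableOn ℝ f (interior (Ici 0)) := fun s hs =>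
      (hasDerivAt_sqrt_mink hdiff (hspace s (hpos s hs))).differentiableAt
        |>.differentiableWithinAt
    have := (convex_Ici (0 : ℝ)).mul_sub_le_image_sub_of_le_deriv hf.continuousOn hf_diff
      (fun s hs => hderiv_ge s (hpos s hs)) 0 self_mem_Ici t ht ht
    simpa [f, mink] using this
end
end

section
/- For λ > 0, the curve γ(τ) = X^λ(λτ, -√(1+λ²) τ) on the surface Σ_λ = image of X^λ satisfies ‖γ'(τ)‖² = (1+λ²)/sinh²(λτ) in the induced metric, and hence γ restricted to [1, ∞) has finite length ∫₁^∞ √(1+λ²)/sinh(λτ) dτ < ∞. Moreover ⟨γ(τ), (0,-1,1)⟩ = -√(1+λ²) e^{-√(1+λ²)τ}/sinh(λτ) → 0 as τ → ∞. -/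
/-!
Along the line `(t, s) = (λτ, -√(1+λ²)τ)` the velocity of `γ` is `λ X_t - √(1+λ²) X_s`, so its
squared Minkowski speed is `λ²E - 2λ√(1+λ²)F + (1+λ²)G` with the first fundamental form
`E = (1+λ²)coth²t`, `F = λ√(1+λ²)coth²t`, `G = λ²coth²t + 1/sinh²t`; everything cancels except
`(1+λ²)/sinh²t`. Since `1/sinh x ≤ 4e^{-x}` for `x ≥ 1`, the speed decays exponentially and is
integrable. Pairing with the null vector `(0,-1,1)` picks out
`-√(1+λ²)(sinh s + cosh s)/sinh t = -√(1+λ²)eˢ/sinh t`, which tends to `0` along `γ`.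
-/

noncomputable section
open Real Set Filter MeasureTheory

/-- The glide-invariant surface parametrization `X^λ`. -/
def Xlam (l : ℝ) (t s : ℝ) : ℝ × ℝ × ℝ :=
  (Real.sqrt (1 + l ^ 2) * (t - Real.cosh t / Real.sinh t) + l * s,
   Real.sqrt (1 + l ^ 2) * Real.sinh s / Real.sinh t,
   Real.sqrt (1 + l ^ 2) * Real.cosh s / Real.sinh t)

theorem mink_smul_add_smul_self (a b : ℝ) (u v : ℝ × ℝ × ℝ) :
    mink (a • u + b • v) (a • u + b • v) =
      a ^ 2 * mink u u + 2 * a * b * mink u v + b ^ 2 * mink v v := by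
  simp only [mink, Prod.fst_add, Prod.snd_add, Prod.smul_fst, Prod.smul_snd, smul_eq_mul]
  ring

/-- `∂X^λ/∂t`; the first entry uses `d/dt (t - coth t) = coth² t`. -/
def XlamDt (l t s : ℝ) : ℝ × ℝ × ℝ :=
  (√(1 + l ^ 2) * (cosh t / sinh t) ^ 2,
   -(√(1 + l ^ 2) * sinh s * cosh t / sinh t ^ 2),
   -(√(1 + l ^ 2) * cosh s * cosh t / sinh t ^ 2))

def XlamDs (l t s : ℝ) : ℝ × ℝ × ℝ :=
  (l, √(1 + l ^ 2) * cosh s / sinh t, √(1 + l ^ 2) * sinh s / sinh t)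

theorem hasDerivAt_Xlam_comp {l t' s' τ : ℝ} {t s : ℝ → ℝ} (ht : HasDerivAt t t' τ)
    (hs : HasDerivAt s s' τ) (h : sinh (t τ) ≠ 0) :
    HasDerivAt (fun τ => Xlam l (t τ) (s τ))
      (t' • XlamDt l (t τ) (s τ) + s' • XlamDs l (t τ) (s τ)) τ := by
  have hX := (((ht.sub (ht.cosh.div ht.sinh h)).const_mul √(1 + l ^ 2)).add
    (hs.const_mul l)).prodMk
    (((hs.sinh.const_mul √(1 + l ^ 2)).div ht.sinh h).prodMk
      ((hs.cosh.const_mul √(1 + l ^ 2)).div ht.sinh h))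
  refine hX.congr_deriv ?_
  simp only [XlamDt, XlamDs, Prod.smul_mk, Prod.mk_add_mk, smul_eq_mul, Prod.mk.injEq]
  refine ⟨?_, ?_, ?_⟩ <;> field_simp <;> ring

theorem mink_XlamDt_self {l t : ℝ} (s : ℝ) (h : sinh t ≠ 0) :
    mink (XlamDt l t s) (XlamDt l t s) = (1 + l ^ 2) * (cosh t / sinh t) ^ 2 := by
  have ha : √(1 + l ^ 2) ^ 2 = 1 + l ^ 2 := sq_sqrt (by positivity)
  simp only [mink, XlamDt]
  field_simp
  linear_combination
    √(1 + l ^ 2) ^ 2 * cosh_sq t - √(1 + l ^ 2) ^ 2 * cosh_sq s + sinh t ^ 2 * ha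

theorem mink_XlamDt_XlamDs {l t : ℝ} (s : ℝ) (h : sinh t ≠ 0) :
    mink (XlamDt l t s) (XlamDs l t s) = l * √(1 + l ^ 2) * (cosh t / sinh t) ^ 2 := by
  simp only [mink, XlamDt, XlamDs]
  field_simp
  ring

theorem mink_XlamDs_self {l t : ℝ} (s : ℝ) (h : sinh t ≠ 0) :
    mink (XlamDs l t s) (XlamDs l t s) = l ^ 2 * (cosh t / sinh t) ^ 2 + 1 / sinh t ^ 2 := by
  have ha : √(1 + l ^ 2) ^ 2 = 1 + l ^ 2 := sq_sqrt (by positivity)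
  simp only [mink, XlamDs]
  field_simp
  linear_combination √(1 + l ^ 2) ^ 2 * cosh_sq s - l ^ 2 * cosh_sq t + ha

theorem mink_Xlam_null (l t s : ℝ) :
    mink (Xlam l t s) (0, -1, 1) = -√(1 + l ^ 2) * exp s / sinh t := by
  simp only [mink, Xlam, ← sinh_add_cosh]
  ring

theorem inv_sinh_le_four_mul_exp_neg {x : ℝ} (hx : 1 ≤ x) : (sinh x)⁻¹ ≤ 4 * exp (-x) := by
  have h1 : x + 1 ≤ exp x := add_one_le_exp x
  have h2 : exp (-x) ≤ 1 := exp_le_one_iff.mpr (by linarith)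
  have hsinh : exp x / 4 ≤ sinh x := by rw [sinh_eq]; linarith
  calc (sinh x)⁻¹ ≤ (exp x / 4)⁻¹ := inv_anti₀ (by positivity) hsinh
    _ = 4 * exp (-x) := by rw [exp_neg]; field_simp

theorem isBigO_inv_sinh_mul_atTop {l : ℝ} (hl : 0 < l) :
    (fun τ => (sinh (l * τ))⁻¹) =O[atTop] fun τ => exp (-l * τ) := by
  refine Asymptotics.IsBigO.of_bound 4 ?_
  filter_upwards [eventually_ge_atTop l⁻¹] with τ hτ
  have hlτ : 1 ≤ l * τ := by rwa [← div_le_iff₀' hl, one_div]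
  have hpos : 0 < sinh (l * τ) := sinh_pos_iff.mpr (by linarith)
  rw [norm_inv, Real.norm_of_nonneg hpos.le, Real.norm_of_nonneg (exp_pos _).le, neg_mul]
  exact inv_sinh_le_four_mul_exp_neg hlτ

theorem integrableOn_inv_sinh_mul_Ici {l c : ℝ} (hl : 0 < l) (hc : 0 < c) :
    IntegrableOn (fun τ => (sinh (l * τ))⁻¹) (Ici c) := by
  rw [integrableOn_Ici_iff_integrableOn_Ioi]
  refine integrable_of_isBigO_exp_neg hl ?_ (isBigO_inv_sinh_mul_atTop hl)
  refine ContinuousOn.inv₀ (by fun_prop) fun τ hτ => (sinh_pos_iff.mpr ?_).ne'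
  exact mul_pos hl (hc.trans_le hτ)

theorem tendsto_exp_neg_mul_atTop_nhds_zero {b : ℝ} (hb : 0 < b) :
    Tendsto (fun x => exp (-b * x)) atTop (nhds 0) :=
  tendsto_exp_atBot.comp (tendsto_id.const_mul_atTop_of_neg (neg_neg_iff_pos.2 hb))

theorem tendsto_inv_sinh_mul_atTop {l : ℝ} (hl : 0 < l) :
    Tendsto (fun τ => (sinh (l * τ))⁻¹) atTop (nhds 0) :=
  (isBigO_inv_sinh_mul_atTop hl).trans_tendsto (tendsto_exp_neg_mul_atTop_nhds_zero hl)

theorem mink_deriv_Xlam_self {l τ : ℝ} (h : sinh (l * τ) ≠ 0) :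
    mink (deriv (fun τ => Xlam l (l * τ) (-√(1 + l ^ 2) * τ)) τ)
      (deriv (fun τ => Xlam l (l * τ) (-√(1 + l ^ 2) * τ)) τ) =
        (1 + l ^ 2) / sinh (l * τ) ^ 2 := by
  have ha : √(1 + l ^ 2) ^ 2 = 1 + l ^ 2 := sq_sqrt (by positivity)
  have hγ := hasDerivAt_Xlam_comp (l := l) (hasDerivAt_const_mul l)
    (hasDerivAt_const_mul (-√(1 + l ^ 2))) h
  rw [hγ.deriv, mink_smul_add_smul_self, mink_XlamDt_self _ h, mink_XlamDt_XlamDs _ h,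
    mink_XlamDs_self _ h]
  field_simp
  linear_combination (1 - l ^ 2 * cosh (l * τ) ^ 2) * ha

/-- For `λ > 0`, the curve `γ(τ) = X^λ(λτ, -√(1+λ²)τ)` on `Σ_λ` has squared speed
`(1+λ²)/sinh²(λτ)`, hence finite length on `[1,∞)` (the speed is integrable there);
moreover `⟨γ(τ), (0,-1,1)⟩ = -√(1+λ²) e^{-√(1+λ²)τ}/sinh(λτ) → 0` as `τ → ∞`. -/
theorem stmt14 (l : ℝ) (hl : 0 < l) :
    let γ : ℝ → ℝ × ℝ × ℝ := fun τ => Xlam l (l * τ) (-(Real.sqrt (1 + l ^ 2)) * τ)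
    (∀ τ : ℝ, 0 < τ →
      mink (deriv γ τ) (deriv γ τ) = (1 + l ^ 2) / (Real.sinh (l * τ)) ^ 2) ∧
    IntegrableOn (fun τ => Real.sqrt (1 + l ^ 2) / Real.sinh (l * τ)) (Ici (1 : ℝ)) ∧
    (∀ τ : ℝ, 0 < τ →
      mink (γ τ) (0, -1, 1) =
        -(Real.sqrt (1 + l ^ 2)) * Real.exp (-(Real.sqrt (1 + l ^ 2)) * τ) /
          Real.sinh (l * τ)) ∧
    Tendsto (fun τ => mink (γ τ) (0, -1, 1)) atTop (nhds 0) := by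
  intro γ
  have hsinh : ∀ τ : ℝ, 0 < τ → sinh (l * τ) ≠ 0 := fun τ hτ =>
    (sinh_pos_iff.mpr (mul_pos hl hτ)).ne'
  have ha : 0 < √(1 + l ^ 2) := sqrt_pos.mpr (by positivity)
  refine ⟨fun τ hτ => mink_deriv_Xlam_self (hsinh τ hτ), ?_, fun τ _ => mink_Xlam_null _ _ _, ?_⟩
  · simp only [div_eq_mul_inv]
    exact (integrableOn_inv_sinh_mul_Ici hl one_pos).const_mul _
  · simp only [γ, mink_Xlam_null, div_eq_mul_inv]
    simpa using ((tendsto_exp_neg_mul_atTop_nhds_zero ha).const_mul (-√(1 + l ^ 2))).mul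
      (tendsto_inv_sinh_mul_atTop hl)
end
end
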